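/- Fix s ≥ 1 and a ≥ 1. There exist a constant C (depending on s and a) and a function c : ℕ → ℝ≥0 with c(N) → 0 as N → ∞ (depending on s and a) such that the following holds. Let b be a nonzero integer with |b| ≤ a, let f : {-N,…,N} → ℂ be bounded in magnitude by 1 (zero outside {-N,…,N}), and define f̃ : {1,…,2aN} → ℂ by f̃(x) = f((x - aN)/b) when x ∈ b·{-N,…,N} + aN, and f̃(x) = 0 for all other x ∈ {1,…,2aN}. Then ‖f̃‖_{U^{s+1}[2aN]} ≤ C · ‖f‖_{U^{s+1}[-N,N]} + c(N). -/

import Mathlib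

/-!
Under `x ↦ b x + aN` a cube `(x, h)` of `[-N, N]` goes to the cube `(b x + aN, b h)`, and `f̃` is
`f` transported along this map. So the Gowers sum of `f̃` over `[1, 2aN]` is the Gowers sum of `f`
over the cubes of `[-N, N]` whose image stays in `[1, 2aN]`: every other cube of `[1, 2aN]` has a
vertex where `f̃` vanishes. As `|b| ≤ a`, a cube can only leave if one of its vertices is `±N`;
there are `O(N^(s+1))` such cubes, each contributing at least `-1`. There are `O(N^(s+2))` cubes in
`[-N, N]` and at least `N^(s+2) / (s+1)^(s+1)` in `[1, 2aN]`. Normalising, and using that Gowers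
sums are nonnegative (they are sums of `|∑ₓ Δ_h f(x)|²`) and that `t ↦ t^(1/2^(s+1))` is
subadditive, gives the bound with constants depending on `s` only.
-/

open Finset Pointwise Filter

noncomputable def gowersNorm (A : Finset ℤ) (d : ℕ) (f : ℤ → ℂ) : ℝ :=
  (((∑ p ∈ (A ×ˢ Fintype.piFinset fun _ : Fin d => A - A).filter
        (fun p => ∀ ω : Finset (Fin d), p.1 + ∑ i ∈ ω, p.2 i ∈ A),
      ∏ ω : Finset (Fin d),
        if ω.card % 2 = 0 then f (p.1 + ∑ i ∈ ω, p.2 i)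
        else (starRingEnd ℂ) (f (p.1 + ∑ i ∈ ω, p.2 i))) /
      (((A ×ˢ Fintype.piFinset fun _ : Fin d => A - A).filter
        (fun p => ∀ ω : Finset (Fin d), p.1 + ∑ i ∈ ω, p.2 i ∈ A)).card : ℂ)).re) ^
    ((1 : ℝ) / 2 ^ d)

theorem prod_finset_fin_succ {M : Type*} [CommMonoid M] {d : ℕ}
    (F : Finset (Fin (d + 1)) → M) :
    ∏ ω, F ω = ∏ t : Finset (Fin d), F (t.image Fin.succ) * F (insert 0 (t.image Fin.succ)) := by
  have huniv : (univ : Finset (Fin (d + 1))) = insert 0 (univ.image Fin.succ) := by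
    rw [Fin.univ_succ, cons_eq_insert, map_eq_image]; rfl
  have hinj :
      Set.InjOn (fun t : Finset (Fin d) => t.image Fin.succ) ↑(univ : Finset (Fin d)).powerset :=
    fun _ _ _ _ h => image_injective (Fin.succ_injective d) h
  rw [prod_mul_distrib, ← powerset_univ, huniv, prod_powerset_insert (by simp), powerset_image,
    prod_image hinj, prod_image hinj, powerset_univ]

theorem sum_piFinset_fin_succ {α M : Type*} [DecidableEq α] [AddCommMonoid M] {d : ℕ}
    (S : Finset α) (F : (Fin (d + 1) → α) → M) :
    ∑ h ∈ Fintype.piFinset (fun _ => S), F h =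
      ∑ y ∈ S, ∑ h ∈ Fintype.piFinset (fun _ : Fin d => S), F (Fin.cons y h) := by
  have h := filter_piFinset_eq_map_consEquiv (fun _ : Fin (d + 1) => S) (fun _ => True)
  simp only [filter_true] at h
  rw [h, sum_map, sum_product]
  rfl

theorem ite_mod_two_succ (n : ℕ) (z : ℂ) :
    (if (n + 1) % 2 = 0 then z else (starRingEnd ℂ) z) =
      (starRingEnd ℂ) (if n % 2 = 0 then z else (starRingEnd ℂ) z) := by
  rcases Nat.even_or_odd n with hn | hn
  · simp [Nat.even_iff.1 hn, Nat.succ_mod_two_eq_one_iff.2 (Nat.even_iff.1 hn)]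
  · simp [Nat.odd_iff.1 hn, Nat.succ_mod_two_eq_zero_iff.2 (Nat.odd_iff.1 hn)]

section Cube

variable {G : Type*} [AddCommGroup G] {d : ℕ}

def cubeVertex (p : G × (Fin d → G)) (ω : Finset (Fin d)) : G := p.1 + ∑ i ∈ ω, p.2 i

def cubeSet [DecidableEq G] (A : Finset G) (d : ℕ) : Finset (G × (Fin d → G)) :=
  (A ×ˢ Fintype.piFinset fun _ : Fin d => A - A).filter fun p => ∀ ω, cubeVertex p ω ∈ A

def cubeTerm (g : G → ℂ) (p : G × (Fin d → G)) : ℂ :=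
  ∏ ω : Finset (Fin d),
    if ω.card % 2 = 0 then g (cubeVertex p ω) else (starRingEnd ℂ) (g (cubeVertex p ω))

def cubeSum [DecidableEq G] (A : Finset G) (d : ℕ) (g : G → ℂ) : ℂ :=
  ∑ p ∈ cubeSet A d, cubeTerm g p

theorem gowersNorm_eq_cubeSum (A : Finset ℤ) (d : ℕ) (g : ℤ → ℂ) :
    gowersNorm A d g = ((cubeSum A d g).re / #(cubeSet A d)) ^ ((1 : ℝ) / 2 ^ d) := by
  rw [gowersNorm, ← Complex.div_natCast_re]; rfl

@[simp] theorem cubeVertex_empty (p : G × (Fin d → G)) : cubeVertex p ∅ = p.1 := by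
  simp [cubeVertex]

theorem cubeVertex_singleton (p : G × (Fin d → G)) (i : Fin d) :
    cubeVertex p {i} = p.1 + p.2 i := by
  simp [cubeVertex]

theorem mem_cubeSet [DecidableEq G] {A : Finset G} {p : G × (Fin d → G)} :
    p ∈ cubeSet A d ↔ ∀ ω, cubeVertex p ω ∈ A := by
  refine ⟨fun h => (mem_filter.1 h).2, fun h => mem_filter.2 ⟨mem_product.2 ⟨?_, ?_⟩, h⟩⟩
  · simpa using h ∅
  · refine Fintype.mem_piFinset.2 fun i => ?_
    simpa [cubeVertex_singleton] using sub_mem_sub (h {i}) (h ∅)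

theorem cubeSet_mono [DecidableEq G] {A B : Finset G} (h : A ⊆ B) : cubeSet A d ⊆ cubeSet B d :=
  fun _ hp => mem_cubeSet.2 fun ω => h (mem_cubeSet.1 hp ω)

theorem cubeTerm_eq_zero {g : G → ℂ} {p : G × (Fin d → G)} {ω : Finset (Fin d)}
    (h : g (cubeVertex p ω) = 0) : cubeTerm g p = 0 :=
  prod_eq_zero (mem_univ ω) (by split_ifs <;> simp [h])

theorem cubeTerm_cons (g : G → ℂ) (x y : G) (h : Fin d → G) :
    cubeTerm g (x, Fin.cons y h) =
      cubeTerm g (x, h) * (starRingEnd ℂ) (cubeTerm g (x + y, h)) := by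
  have hsucc (t : Finset (Fin d)) :
      cubeVertex (x, (Fin.cons y h : Fin (d + 1) → G)) (t.image Fin.succ) =
        cubeVertex (x, h) t := by
    simp [cubeVertex, sum_image (Fin.succ_injective d).injOn]
  have hinsert (t : Finset (Fin d)) :
      cubeVertex (x, (Fin.cons y h : Fin (d + 1) → G)) (insert 0 (t.image Fin.succ)) =
        cubeVertex (x + y, h) t := by
    simp [cubeVertex, sum_image (Fin.succ_injective d).injOn, add_assoc]
  have hcard (t : Finset (Fin d)) : #(t.image Fin.succ) = #t :=
    card_image_of_injective t (Fin.succ_injective d)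
  rw [cubeTerm, prod_finset_fin_succ, prod_mul_distrib, cubeTerm, cubeTerm, map_prod]
  congr 1 <;> refine prod_congr rfl fun t _ => ?_
  · rw [hsucc, hcard]
  · rw [hinsert, card_insert_of_notMem (by simp), hcard, ite_mod_two_succ]

theorem cubeSum_succ_eq_sum_normSq [DecidableEq G] {A : Finset G} {g : G → ℂ}
    (hg : ∀ x ∉ A, g x = 0) :
    cubeSum A (d + 1) g = ∑ h ∈ Fintype.piFinset (fun _ : Fin d => A - A),
      (Complex.normSq (∑ x ∈ A, cubeTerm g (x, h)) : ℂ) := by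
  have hzero (x : G) (hx : x ∉ A) (h : Fin d → G) : cubeTerm g (x, h) = 0 :=
    cubeTerm_eq_zero (ω := ∅) (by simpa using hg x hx)
  have hshift (x : G) (hx : x ∈ A) (h : Fin d → G) :
      ∑ y ∈ A - A, cubeTerm g (x + y, h) = ∑ z ∈ A, cubeTerm g (z, h) := by
    calc ∑ y ∈ A - A, cubeTerm g (x + y, h)
        = ∑ z ∈ (A - A).map (addLeftEmbedding x), cubeTerm g (z, h) := by simp [sum_map]
      _ = ∑ z ∈ A, cubeTerm g (z, h) :=
        (sum_subset (fun z hz => mem_map.2 ⟨z - x, sub_mem_sub hz hx, by simp⟩)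
          fun z _ hz => hzero z hz h).symm
  have hunfilter : cubeSum A (d + 1) g =
      ∑ p ∈ A ×ˢ Fintype.piFinset (fun _ : Fin (d + 1) => A - A), cubeTerm g p := by
    refine sum_subset (filter_subset _ _) fun p hp hnp => ?_
    obtain ⟨ω, hω⟩ := not_forall.1 fun h => hnp (mem_filter.2 ⟨hp, h⟩)
    exact cubeTerm_eq_zero (hg _ hω)
  calc cubeSum A (d + 1) g
      = ∑ x ∈ A, ∑ y ∈ A - A, ∑ h ∈ Fintype.piFinset (fun _ : Fin d => A - A),
          cubeTerm g (x, h) * (starRingEnd ℂ) (cubeTerm g (x + y, h)) := by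
        rw [hunfilter, sum_product]
        simp_rw [sum_piFinset_fin_succ, cubeTerm_cons]
    _ = ∑ x ∈ A, ∑ h ∈ Fintype.piFinset (fun _ : Fin d => A - A),
          cubeTerm g (x, h) * (starRingEnd ℂ) (∑ z ∈ A, cubeTerm g (z, h)) :=
        sum_congr rfl fun x hx => by
          rw [sum_comm]
          simp_rw [← mul_sum, ← map_sum, hshift x hx]
    _ = _ := by
        rw [sum_comm]
        simp_rw [← sum_mul, Complex.mul_conj]

theorem cubeSum_congr [DecidableEq G] {A : Finset G} {g g' : G → ℂ}
    (h : ∀ x ∈ A, g x = g' x) : cubeSum A d g = cubeSum A d g' :=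
  sum_congr rfl fun _ hp => prod_congr rfl fun ω _ => by rw [h _ (mem_cubeSet.1 hp ω)]

theorem re_cubeSum_succ_nonneg [DecidableEq G] (A : Finset G) (g : G → ℂ) :
    0 ≤ (cubeSum A (d + 1) g).re := by
  classical
  rw [cubeSum_congr (g' := fun x => if x ∈ A then g x else 0) fun x hx => (if_pos hx).symm,
    cubeSum_succ_eq_sum_normSq fun x hx => if_neg hx, Complex.re_sum]
  exact sum_nonneg fun _ _ => Complex.normSq_nonneg _

theorem neg_one_le_re_cubeTerm {g : G → ℂ} (hg : ∀ x, ‖g x‖ ≤ 1) (p : G × (Fin d → G)) :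
    -1 ≤ (cubeTerm g p).re := by
  have hnorm : ‖cubeTerm g p‖ ≤ 1 :=
    (Finset.norm_prod_le _ _).trans <| prod_le_one (fun _ _ => norm_nonneg _) fun ω _ => by
      split_ifs
      · exact hg _
      · simpa using hg _
  exact (abs_le.1 ((Complex.abs_re_le_norm _).trans hnorm)).1

theorem card_cubeSet_le [DecidableEq G] (A : Finset G) :
    #(cubeSet A d) ≤ #A * #(A - A) ^ d :=
  (card_filter_le _ _).trans (by simp [card_product])

theorem card_filter_exists_cubeVertex_mem_le [DecidableEq G] (A S : Finset G) :
    #{p ∈ cubeSet A d | ∃ ω, cubeVertex p ω ∈ S} ≤ 2 ^ d * (#S * #(A - A) ^ d) := by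
  have hslice (ω : Finset (Fin d)) :
      #{p ∈ cubeSet A d | cubeVertex p ω ∈ S} ≤ #S * #(A - A) ^ d := by
    calc #{p ∈ cubeSet A d | cubeVertex p ω ∈ S}
        ≤ #(S ×ˢ Fintype.piFinset fun _ : Fin d => A - A) := by
          refine card_le_card_of_injOn (fun p => (cubeVertex p ω, p.2)) (fun p hp => ?_) ?_
          · obtain ⟨hp, hω⟩ := mem_filter.1 hp
            exact mem_product.2 ⟨hω, (mem_product.1 (mem_filter.1 hp).1).2⟩
          · intro p _ q _ hpq
            obtain ⟨hv, h2⟩ := Prod.mk.inj hpq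
            simp only [cubeVertex, h2] at hv
            exact Prod.ext (add_right_cancel hv) h2
      _ = #S * #(A - A) ^ d := by simp [card_product]
  calc #{p ∈ cubeSet A d | ∃ ω, cubeVertex p ω ∈ S}
      ≤ #(univ.biUnion fun ω => {p ∈ cubeSet A d | cubeVertex p ω ∈ S}) := by
        refine card_le_card fun p hp => ?_
        obtain ⟨hp, ω, hω⟩ := mem_filter.1 hp
        exact mem_biUnion.2 ⟨ω, mem_univ _, mem_filter.2 ⟨hp, hω⟩⟩
    _ ≤ ∑ ω : Finset (Fin d), #S * #(A - A) ^ d :=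
        card_biUnion_le.trans (sum_le_sum fun ω _ => hslice ω)
    _ = 2 ^ d * (#S * #(A - A) ^ d) := by simp [Fintype.card_finset]

end Cube

section Affine

variable {d : ℕ}

def affineCube (b c : ℤ) (p : ℤ × (Fin d → ℤ)) : ℤ × (Fin d → ℤ) :=
  (b * p.1 + c, fun i => b * p.2 i)

theorem cubeVertex_affineCube (b c : ℤ) (p : ℤ × (Fin d → ℤ)) (ω : Finset (Fin d)) :
    cubeVertex (affineCube b c p) ω = b * cubeVertex p ω + c := by
  simp only [cubeVertex, affineCube, mul_add, mul_sum]
  ring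

theorem affineCube_injective {b : ℤ} (hb : b ≠ 0) (c : ℤ) :
    Function.Injective (affineCube (d := d) b c) := by
  intro p q hpq
  obtain ⟨h1, h2⟩ := Prod.mk.inj hpq
  exact Prod.ext (mul_left_cancel₀ hb (add_right_cancel h1))
    (funext fun i => mul_left_cancel₀ hb (congrFun h2 i))

theorem exists_affineCube_eq {b c : ℤ} {p : ℤ × (Fin d → ℤ)}
    (h : ∀ ω, b ∣ cubeVertex p ω - c) : ∃ q, affineCube b c q = p := by
  obtain ⟨x, hx⟩ : b ∣ p.1 - c := by simpa using h ∅
  have hdiff (i : Fin d) : b ∣ p.2 i := by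
    simpa [cubeVertex_singleton] using dvd_sub (h {i}) (h ∅)
  choose y hy using hdiff
  exact ⟨(x, y), Prod.ext (by simp [affineCube, ← hx]) (funext fun i => (hy i).symm)⟩

theorem cubeSum_affine {b : ℤ} (hb : b ≠ 0) (c : ℤ) (A A' : Finset ℤ) (g : ℤ → ℂ) :
    cubeSum A' d
        (fun x => if x ∈ A' ∧ b ∣ x - c ∧ (x - c) / b ∈ A then g ((x - c) / b) else 0) =
      ∑ q ∈ cubeSet A d with affineCube b c q ∈ cubeSet A' d, cubeTerm g q := by
  set g' := fun x => if x ∈ A' ∧ b ∣ x - c ∧ (x - c) / b ∈ A then g ((x - c) / b) else 0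
  set good := {q ∈ cubeSet A d | affineCube b c q ∈ cubeSet A' d}
  have hterm (q : ℤ × (Fin d → ℤ)) (hq : q ∈ good) :
      cubeTerm g' (affineCube b c q) = cubeTerm g q := by
    obtain ⟨hqA, hqA'⟩ := mem_filter.1 hq
    refine prod_congr rfl fun ω _ => ?_
    have hω := mem_cubeSet.1 hqA' ω
    rw [cubeVertex_affineCube] at hω ⊢
    simp [g', hb, hω, mem_cubeSet.1 hqA ω]
  let e : (ℤ × (Fin d → ℤ)) ↪ (ℤ × (Fin d → ℤ)) := ⟨affineCube b c, affineCube_injective hb c⟩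
  have hzero (p : ℤ × (Fin d → ℤ)) (hpA' : p ∈ cubeSet A' d) (hp : p ∉ good.map e) :
      cubeTerm g' p = 0 := by
    by_cases hall :
        ∀ ω, cubeVertex p ω ∈ A' ∧ b ∣ cubeVertex p ω - c ∧ (cubeVertex p ω - c) / b ∈ A
    · obtain ⟨q, rfl⟩ := exists_affineCube_eq fun ω => (hall ω).2.1
      have hqA : q ∈ cubeSet A d := mem_cubeSet.2 fun ω => by
        simpa [cubeVertex_affineCube, hb] using (hall ω).2.2
      exact absurd (mem_map.2 ⟨q, mem_filter.2 ⟨hqA, hpA'⟩, rfl⟩) hp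
    · obtain ⟨ω, hω⟩ := not_forall.1 hall
      exact cubeTerm_eq_zero (if_neg hω)
  calc cubeSum A' d g'
      = ∑ p ∈ good.map e, cubeTerm g' p := by
        refine (sum_subset (fun p hp => ?_) hzero).symm
        obtain ⟨q, hq, rfl⟩ := mem_map.1 hp
        exact (mem_filter.1 hq).2
    _ = ∑ q ∈ good, cubeTerm g' (affineCube b c q) := sum_map _ e _
    _ = _ := sum_congr rfl hterm

end Affine

theorem mul_add_mem_Icc {a b v : ℤ} {N : ℕ} (hb : b ≠ 0) (hba : |b| ≤ a) (hv : |v| < N) :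
    b * v + a * N ∈ Icc 1 (2 * a * N) := by
  have hb1 : 1 ≤ |b| := Int.one_le_abs hb
  have hbv : |b * v| ≤ a * (N - 1) := by
    rw [abs_mul]
    exact mul_le_mul hba (by omega) (abs_nonneg _) (by linarith)
  rw [abs_le] at hbv
  rw [mem_Icc]
  constructor <;> nlinarith

theorem card_Icc_sub_Icc_le (N : ℕ) : #(Icc (-N : ℤ) N - Icc (-N : ℤ) N) ≤ 4 * N + 1 := by
  have hsub : Icc (-N : ℤ) N - Icc (-N : ℤ) N ⊆ Icc (-(2 * N : ℤ)) (2 * N) := fun z hz => by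
    obtain ⟨x, hx, y, hy, rfl⟩ := mem_sub.1 hz
    rw [mem_Icc] at hx hy ⊢
    omega
  exact (card_le_card hsub).trans (by simp; omega)

theorem card_cubeSet_Icc_le {d N : ℕ} (hN : 1 ≤ N) :
    #(cubeSet (Icc (-N : ℤ) N) d) ≤ (5 * N) ^ (d + 1) := by
  calc #(cubeSet (Icc (-N : ℤ) N) d)
      ≤ #(Icc (-N : ℤ) N) * #(Icc (-N : ℤ) N - Icc (-N : ℤ) N) ^ d := card_cubeSet_le _
    _ ≤ (5 * N) * (5 * N) ^ d := by
        gcongr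
        · simp; omega
        · exact (card_Icc_sub_Icc_le N).trans (by omega)
    _ = (5 * N) ^ (d + 1) := by ring

theorem exists_cubeVertex_mem_of_affineCube_notMem {d : ℕ} {a b : ℤ} {N : ℕ} (hb : b ≠ 0)
    (hba : |b| ≤ a) {q : ℤ × (Fin d → ℤ)} (hq : q ∈ cubeSet (Icc (-N : ℤ) N) d)
    (hq' : affineCube b (a * N) q ∉ cubeSet (Icc 1 (2 * a * N)) d) :
    ∃ ω, cubeVertex q ω ∈ ({(N : ℤ), -(N : ℤ)} : Finset ℤ) := by
  refine not_forall_not.1 fun h => hq' (mem_cubeSet.2 fun ω => ?_)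
  rw [cubeVertex_affineCube]
  refine mul_add_mem_Icc hb hba (abs_lt.2 ?_)
  have hω := mem_Icc.1 (mem_cubeSet.1 hq ω)
  have hω' := h ω
  simp only [mem_insert, mem_singleton, not_or] at hω'
  omega

theorem re_cubeSum_rescale_le {d : ℕ} {a b : ℤ} {N : ℕ} (hb : b ≠ 0) (hba : |b| ≤ a)
    {f : ℤ → ℂ} (hf : ∀ x, ‖f x‖ ≤ 1) :
    (cubeSum (Icc 1 (2 * a * N)) d fun x =>
        if x ∈ Icc 1 (2 * a * N) ∧ b ∣ x - a * N ∧ (x - a * N) / b ∈ Icc (-N : ℤ) N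
        then f ((x - a * N) / b) else 0).re ≤
      (cubeSum (Icc (-N : ℤ) N) d f).re + 2 ^ (d + 1) * (4 * N + 1) ^ d := by
  set A := Icc (-N : ℤ) N
  set bad := {q ∈ cubeSet A d | affineCube b (a * N) q ∉ cubeSet (Icc 1 (2 * a * N)) d}
  have hcard : #bad ≤ 2 ^ (d + 1) * (4 * N + 1) ^ d := calc
    #bad ≤ #{q ∈ cubeSet A d | ∃ ω, cubeVertex q ω ∈ ({(N : ℤ), -(N : ℤ)} : Finset ℤ)} :=
      card_le_card fun q hq => mem_filter.2 ⟨(mem_filter.1 hq).1,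
        exists_cubeVertex_mem_of_affineCube_notMem hb hba (mem_filter.1 hq).1 (mem_filter.1 hq).2⟩
    _ ≤ 2 ^ d * (#({(N : ℤ), -(N : ℤ)} : Finset ℤ) * #(A - A) ^ d) :=
      card_filter_exists_cubeVertex_mem_le _ _
    _ ≤ 2 ^ d * (2 * (4 * N + 1) ^ d) := by
      gcongr
      · exact card_le_two
      · exact card_Icc_sub_Icc_le N
    _ = 2 ^ (d + 1) * (4 * N + 1) ^ d := by ring
  have hlow : -(#bad : ℝ) ≤ ∑ q ∈ bad, (cubeTerm f q).re := by
    simpa using card_nsmul_le_sum bad (fun q => (cubeTerm f q).re) (-1)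
      fun q _ => neg_one_le_re_cubeTerm hf q
  have hcard' : (#bad : ℝ) ≤ 2 ^ (d + 1) * (4 * N + 1) ^ d := by exact_mod_cast hcard
  rw [cubeSum_affine hb, cubeSum, Complex.re_sum, Complex.re_sum,
    ← sum_filter_add_sum_filter_not (cubeSet A d)
      fun q => affineCube b (a * N) q ∈ cubeSet (Icc 1 (2 * a * N)) d]
  linarith

theorem pow_succ_le_card_cubeSet_Icc {d : ℕ} (hd : 0 < d) {a : ℤ} (ha : 1 ≤ a) (N : ℕ) :
    N ^ (d + 1) ≤ d ^ d * #(cubeSet (Icc 1 (2 * a * N)) d) := by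
  set K := N / d
  have hbox : Icc (1 : ℤ) N ×ˢ Fintype.piFinset (fun _ : Fin d => Icc (0 : ℤ) K) ⊆
      cubeSet (Icc 1 (2 * a * N)) d := fun p hp => mem_cubeSet.2 fun ω => by
    obtain ⟨hx, hh⟩ := mem_product.1 hp
    have hh' (i : Fin d) := mem_Icc.1 (Fintype.mem_piFinset.1 hh i)
    have hsum : ∑ i ∈ ω, p.2 i ≤ d * K := calc
      ∑ i ∈ ω, p.2 i ≤ ∑ _i ∈ ω, (K : ℤ) := sum_le_sum fun i _ => (hh' i).2
      _ ≤ d * K := by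
        rw [sum_const, nsmul_eq_mul]
        gcongr
        exact_mod_cast (card_le_univ ω).trans (Fintype.card_fin d).le
    have hdK : (d * K : ℤ) ≤ N := by exact_mod_cast Nat.mul_div_le N d
    have hnonneg : 0 ≤ ∑ i ∈ ω, p.2 i := sum_nonneg fun i _ => (hh' i).1
    rw [mem_Icc] at hx ⊢
    unfold cubeVertex
    constructor <;> nlinarith
  have hN : N ≤ d * (K + 1) := (Nat.lt_mul_div_succ N hd).le
  calc N ^ (d + 1) = N * N ^ d := by ring
    _ ≤ N * (d * (K + 1)) ^ d := by gcongr
    _ = d ^ d * (N * (K + 1) ^ d) := by rw [mul_pow]; ring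
    _ = d ^ d * #(Icc (1 : ℤ) N ×ˢ Fintype.piFinset (fun _ : Fin d => Icc (0 : ℤ) K)) := by
        simp [card_product]
    _ ≤ d ^ d * #(cubeSet (Icc 1 (2 * a * N)) d) := by gcongr

theorem card_cubeSet_Icc_le_mul {d : ℕ} (hd : 0 < d) {a : ℤ} (ha : 1 ≤ a) {N : ℕ} (hN : 1 ≤ N) :
    #(cubeSet (Icc (-N : ℤ) N) d) ≤ 10 ^ (d + 1) * d ^ d * #(cubeSet (Icc 1 (2 * a * N)) d) :=
  calc #(cubeSet (Icc (-N : ℤ) N) d)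
      ≤ (5 * N) ^ (d + 1) := card_cubeSet_Icc_le hN
    _ = 5 ^ (d + 1) * N ^ (d + 1) := mul_pow _ _ _
    _ ≤ 10 ^ (d + 1) * (d ^ d * #(cubeSet (Icc 1 (2 * a * N)) d)) := by
        gcongr
        · norm_num
        · exact pow_succ_le_card_cubeSet_Icc hd ha N
    _ = _ := by ring

/-- The error term of `re_cubeSum_rescale_le` is `O(1/N)` relative to the number of cubes of
`[1, 2aN]`. -/
theorem boundary_mul_le_card_cubeSet_Icc {d : ℕ} (hd : 0 < d) {a : ℤ} (ha : 1 ≤ a) (N : ℕ) :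
    2 ^ (d + 1) * (4 * N + 1) ^ d * N ≤ 10 ^ (d + 1) * d ^ d * #(cubeSet (Icc 1 (2 * a * N)) d) :=
  calc 2 ^ (d + 1) * (4 * N + 1) ^ d * N ≤ 2 ^ (d + 1) * (5 * N) ^ d * (5 * N) := by
        rcases N.eq_zero_or_pos with rfl | hN
        · simp
        · gcongr <;> omega
    _ = 2 ^ (d + 1) * 5 ^ (d + 1) * N ^ (d + 1) := by ring
    _ = 10 ^ (d + 1) * N ^ (d + 1) := by rw [← mul_pow]; norm_num
    _ ≤ 10 ^ (d + 1) * (d ^ d * #(cubeSet (Icc 1 (2 * a * N)) d)) := by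
        gcongr
        exact pow_succ_le_card_cubeSet_Icc hd ha N
    _ = _ := by ring

theorem rpow_div_le_mul_rpow_div_add {X X' B T T' K ε e : ℝ} (hX : 0 ≤ X) (hX' : 0 ≤ X')
    (hXX' : X' ≤ X + B) (hT : 0 < T) (hT' : 0 < T') (hK : 1 ≤ K) (hTK : T ≤ K * T')
    (hB : B ≤ ε * T') (hε : 0 ≤ ε) (he0 : 0 ≤ e) (he1 : e ≤ 1) :
    (X' / T') ^ e ≤ K * (X / T) ^ e + ε ^ e := by
  have hXT : X ≤ K * (X / T) * T' := calc
    X = X / T * T := by field_simp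
    _ ≤ X / T * (K * T') := by gcongr
    _ = K * (X / T) * T' := by ring
  have hratio : X' / T' ≤ K * (X / T) + ε := by
    rw [div_le_iff₀ hT', add_mul]
    linarith
  calc (X' / T') ^ e ≤ (K * (X / T) + ε) ^ e :=
        Real.rpow_le_rpow (div_nonneg hX' hT'.le) hratio he0
    _ ≤ (K * (X / T)) ^ e + ε ^ e := Real.rpow_add_le_add_rpow (by positivity) hε he0 he1
    _ = K ^ e * (X / T) ^ e + ε ^ e := by rw [Real.mul_rpow (by linarith) (by positivity)]
    _ ≤ K * (X / T) ^ e + ε ^ e := by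
        gcongr
        exact Real.rpow_le_self_of_one_le hK he1

theorem gowersNorm_rescale_le (s : ℕ) {a b : ℤ} {N : ℕ} (hN : 1 ≤ N) (hb : b ≠ 0)
    (hba : |b| ≤ a) {f : ℤ → ℂ} (hf : ∀ x, ‖f x‖ ≤ 1) :
    gowersNorm (Icc 1 (2 * a * N)) (s + 1) (fun x =>
        if 1 ≤ x ∧ x ≤ 2 * a * N ∧ b ∣ x - a * N ∧ (x - a * N) / b ∈ Icc (-N : ℤ) N
        then f ((x - a * N) / b) else 0) ≤
      10 ^ (s + 2) * (s + 1) ^ (s + 1) * gowersNorm (Icc (-N : ℤ) N) (s + 1) f +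
        (10 ^ (s + 2) * (s + 1) ^ (s + 1) / N) ^ ((1 : ℝ) / 2 ^ (s + 1)) := by
  have ha : 1 ≤ a := (Int.one_le_abs hb).trans hba
  have hTK := card_cubeSet_Icc_le_mul s.succ_pos ha hN
  have hB := boundary_mul_le_card_cubeSet_Icc s.succ_pos ha N
  have hTpos : 0 < #(cubeSet (Icc (-N : ℤ) N) (s + 1)) :=
    card_pos.2 ⟨(0, 0), mem_cubeSet.2 fun ω => by simp [cubeVertex]⟩
  have hT'pos := Nat.pos_of_mul_pos_left (hTpos.trans_le hTK)
  have hNR : (0 : ℝ) < N := by exact_mod_cast hN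
  have hft : (fun x : ℤ =>
        if 1 ≤ x ∧ x ≤ 2 * a * N ∧ b ∣ x - a * N ∧ (x - a * N) / b ∈ Icc (-N : ℤ) N
        then f ((x - a * N) / b) else 0) = fun x =>
        if x ∈ Icc 1 (2 * a * N) ∧ b ∣ x - a * N ∧ (x - a * N) / b ∈ Icc (-N : ℤ) N
        then f ((x - a * N) / b) else 0 := by
    simp only [mem_Icc, and_assoc]
  rw [hft, gowersNorm_eq_cubeSum, gowersNorm_eq_cubeSum]
  refine rpow_div_le_mul_rpow_div_add (re_cubeSum_succ_nonneg _ _) (re_cubeSum_succ_nonneg _ _)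
    (re_cubeSum_rescale_le hb hba hf) (by exact_mod_cast hTpos) (by exact_mod_cast hT'pos)
    (one_le_mul_of_one_le_of_one_le (one_le_pow₀ (by norm_num)) (one_le_pow₀ (by linarith)))
    (by exact_mod_cast hTK) ?_ (by positivity) (by positivity) ?_
  · rw [div_mul_eq_mul_div, le_div_iff₀ hNR]
    exact_mod_cast hB
  · rw [div_le_one (by positivity)]
    exact one_le_pow₀ (by norm_num)

open scoped Classical in
theorem rescaled_gowers_norm_general (s a : ℕ) :
    ∃ C : ℝ, ∃ c : ℕ → ℝ, (∀ N, 0 ≤ c N) ∧ Tendsto c atTop (nhds 0) ∧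
      ∀ N : ℕ, 1 ≤ N → ∀ b : ℤ, b ≠ 0 → |b| ≤ (a : ℤ) →
        ∀ f : ℤ → ℂ,
          (∀ x, ‖f x‖ ≤ 1) →
          (∀ x, x ∉ Finset.Icc (-(N : ℤ)) (N : ℤ) → f x = 0) →
          gowersNorm (Finset.Icc (1 : ℤ) (2 * (a : ℤ) * (N : ℤ))) (s + 1)
              (fun x : ℤ =>
                if 1 ≤ x ∧ x ≤ 2 * (a : ℤ) * N ∧ b ∣ (x - (a : ℤ) * N) ∧
                    (x - (a : ℤ) * N) / b ∈ Finset.Icc (-(N : ℤ)) (N : ℤ)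
                then f ((x - (a : ℤ) * N) / b) else 0) ≤
            C * gowersNorm (Finset.Icc (-(N : ℤ)) (N : ℤ)) (s + 1) f + c N := by
  set K : ℝ := 10 ^ (s + 2) * (s + 1) ^ (s + 1)
  have he : (0 : ℝ) < 1 / 2 ^ (s + 1) := by positivity
  refine ⟨K, fun N => (K / N) ^ ((1 : ℝ) / 2 ^ (s + 1)), fun N => by positivity, ?_,
    fun N hN b hb hba f hf _ => gowersNorm_rescale_le s hN hb hba hf⟩
  simpa [Real.zero_rpow he.ne'] using
    (tendsto_const_div_atTop_nhds_zero_nat K).rpow_const (p := 1 / 2 ^ (s + 1)) (Or.inr he.le)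

open scoped Classical in
/-- Lemma 3.1 (`l:gowNorms`): the Gowers norm of the rescaled/recentred function
`f̃(x) = f((x - aN)/b)` on `{1,…,2aN}` is controlled by that of `f` on `{-N,…,N}`. -/
theorem rescaled_gowers_norm (s a : ℕ) (hs : 1 ≤ s) (ha : 1 ≤ a) :
    ∃ C : ℝ, ∃ c : ℕ → ℝ, (∀ N, 0 ≤ c N) ∧ Tendsto c atTop (nhds 0) ∧
      ∀ N : ℕ, 1 ≤ N → ∀ b : ℤ, b ≠ 0 → |b| ≤ (a : ℤ) →
        ∀ f : ℤ → ℂ,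
          (∀ x, ‖f x‖ ≤ 1) →
          (∀ x, x ∉ Finset.Icc (-(N : ℤ)) (N : ℤ) → f x = 0) →
          gowersNorm (Finset.Icc (1 : ℤ) (2 * (a : ℤ) * (N : ℤ))) (s + 1)
              (fun x : ℤ =>
                if 1 ≤ x ∧ x ≤ 2 * (a : ℤ) * N ∧ b ∣ (x - (a : ℤ) * N) ∧
                    (x - (a : ℤ) * N) / b ∈ Finset.Icc (-(N : ℤ)) (N : ℤ)
                then f ((x - (a : ℤ) * N) / b) else 0) ≤
            C * gowersNorm (Finset.Icc (-(N : ℤ)) (N : ℤ)) (s + 1) f + c N :=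
  rescaled_gowers_norm_general s a
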